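/- Let d ≥ 2. Define Ω = {(ω₁,ω₂) ∈ ℝ^{2d} : 1 + |ω₂|² + 2⟨ω₁,ω₂⟩ > 0} and F(ω₁,ω₂) = (-ω₁-ω₂, ω₂)/√(1+|ω₂|²+2⟨ω₁,ω₂⟩). Then the unit sphere 𝕊₁^{2d-1} = {|ω₁|²+|ω₂|² = 1} is contained in Ω, F maps Ω into Ω, F ∘ F = id on Ω, and F maps 𝕊₁^{2d-1} into 𝕊₁^{2d-1}. -/

import Mathlib

open RealInnerProductSpace

/-- The normalized involution `F(ω₁,ω₂) = (-ω₁-ω₂, ω₂)/√(1+|ω₂|²+2⟨ω₁,ω₂⟩)`. -/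
noncomputable def normInvol {d : ℕ}
    (ω : EuclideanSpace ℝ (Fin d) × EuclideanSpace ℝ (Fin d)) :
    EuclideanSpace ℝ (Fin d) × EuclideanSpace ℝ (Fin d) :=
  ((Real.sqrt (1 + ‖ω.2‖ ^ 2 + 2 * ⟪ω.1, ω.2⟫))⁻¹ • (-ω.1 - ω.2),
    (Real.sqrt (1 + ‖ω.2‖ ^ 2 + 2 * ⟪ω.1, ω.2⟫))⁻¹ • ω.2)

/-- The domain `Ω = {(ω₁,ω₂) : 1 + |ω₂|² + 2⟨ω₁,ω₂⟩ > 0}`. -/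
def normInvolDomain (d : ℕ) :
    Set (EuclideanSpace ℝ (Fin d) × EuclideanSpace ℝ (Fin d)) :=
  {ω | 0 < 1 + ‖ω.2‖ ^ 2 + 2 * ⟪ω.1, ω.2⟫}

private theorem normInvol_key {d : ℕ} (ω : EuclideanSpace ℝ (Fin d) × EuclideanSpace ℝ (Fin d))
    (hω : ω ∈ normInvolDomain d) :
    1 + ‖(normInvol ω).2‖ ^ 2 + 2 * ⟪(normInvol ω).1, (normInvol ω).2⟫
      = (1 + ‖ω.2‖ ^ 2 + 2 * ⟪ω.1, ω.2⟫)⁻¹ := by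
  have hs : (0:ℝ) < 1 + ‖ω.2‖ ^ 2 + 2 * ⟪ω.1, ω.2⟫ := hω
  set s := 1 + ‖ω.2‖ ^ 2 + 2 * ⟪ω.1, ω.2⟫ with hsdef
  have hpos : 0 < Real.sqrt s := Real.sqrt_pos.mpr hs
  have ht2 : (Real.sqrt s)⁻¹ * (Real.sqrt s)⁻¹ = s⁻¹ := by
    rw [← mul_inv, Real.mul_self_sqrt hs.le]
  have hinv : s⁻¹ * s = 1 := inv_mul_cancel₀ (ne_of_gt hs)
  simp only [normInvol, norm_smul, Real.norm_eq_abs, abs_of_nonneg (inv_nonneg.mpr hpos.le),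
    real_inner_smul_left, real_inner_smul_right, inner_sub_left, inner_neg_left,
    real_inner_self_eq_norm_sq]
  linear_combination (‖ω.2‖^2 - 2*(⟪ω.1, ω.2⟫:ℝ) - 2*‖ω.2‖^2) * ht2 + s⁻¹ * hsdef - hinv
    + ‖ω.2‖ ^ 2 * sq_abs (Real.sqrt (1 + ‖ω.2‖ ^ 2 + 2 * ⟪ω.1, ω.2⟫))⁻¹

theorem normalized_involution_properties (d : ℕ) (hd : 2 ≤ d) :
    (∀ ω : EuclideanSpace ℝ (Fin d) × EuclideanSpace ℝ (Fin d),
        ‖ω.1‖ ^ 2 + ‖ω.2‖ ^ 2 = 1 → ω ∈ normInvolDomain d) ∧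
      (∀ ω ∈ normInvolDomain d, normInvol ω ∈ normInvolDomain d) ∧
      (∀ ω ∈ normInvolDomain d, normInvol (normInvol ω) = ω) ∧
      (∀ ω : EuclideanSpace ℝ (Fin d) × EuclideanSpace ℝ (Fin d),
        ‖ω.1‖ ^ 2 + ‖ω.2‖ ^ 2 = 1 →
          ‖(normInvol ω).1‖ ^ 2 + ‖(normInvol ω).2‖ ^ 2 = 1) := by
  have sphere_mem : ∀ ω : EuclideanSpace ℝ (Fin d) × EuclideanSpace ℝ (Fin d),
      ‖ω.1‖ ^ 2 + ‖ω.2‖ ^ 2 = 1 → ω ∈ normInvolDomain d := by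
    intro ω h
    have hcs := abs_real_inner_le_norm ω.1 ω.2
    have hineq : -(‖ω.1‖ * ‖ω.2‖) ≤ ⟪ω.1, ω.2⟫ := by
      have := neg_abs_le (⟪ω.1, ω.2⟫ : ℝ)
      linarith
    show (0:ℝ) < 1 + ‖ω.2‖ ^ 2 + 2 * ⟪ω.1, ω.2⟫
    nlinarith [sq_nonneg (‖ω.1‖ - ‖ω.2‖), sq_nonneg (‖ω.1‖ - 2*‖ω.2‖)]
  refine ⟨sphere_mem, ?_, ?_, ?_⟩
  · intro ω hω
    have hs : (0:ℝ) < 1 + ‖ω.2‖ ^ 2 + 2 * ⟪ω.1, ω.2⟫ := hω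
    show (0:ℝ) < 1 + ‖(normInvol ω).2‖ ^ 2 + 2 * ⟪(normInvol ω).1, (normInvol ω).2⟫
    rw [normInvol_key ω hω]
    exact inv_pos.mpr hs
  · intro ω hω
    have hs : (0:ℝ) < 1 + ‖ω.2‖ ^ 2 + 2 * ⟪ω.1, ω.2⟫ := hω
    have hpos : 0 < Real.sqrt (1 + ‖ω.2‖ ^ 2 + 2 * ⟪ω.1, ω.2⟫) := Real.sqrt_pos.mpr hs
    have harg := normInvol_key ω hω
    rw [normInvol, harg, Real.sqrt_inv, inv_inv, normInvol]
    set S := Real.sqrt (1 + ‖ω.2‖ ^ 2 + 2 * ⟪ω.1, ω.2⟫) with hS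
    clear_value S
    have hc : S * S⁻¹ = 1 := mul_inv_cancel₀ (ne_of_gt hpos)
    refine Prod.ext ?_ ?_ <;>
      · simp only
        match_scalars <;> first
          | ring1
          | linear_combination hc
  · intro ω h
    have hs : (0:ℝ) < 1 + ‖ω.2‖ ^ 2 + 2 * ⟪ω.1, ω.2⟫ := sphere_mem ω h
    have hpos : 0 < Real.sqrt (1 + ‖ω.2‖ ^ 2 + 2 * ⟪ω.1, ω.2⟫) := Real.sqrt_pos.mpr hs
    have hne : (-ω.1 - ω.2 : EuclideanSpace ℝ (Fin d)) = -(ω.1 + ω.2) := by module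
    have hadd : ‖ω.1 + ω.2‖ ^ 2 = ‖ω.1‖ ^ 2 + 2 * ⟪ω.1, ω.2⟫ + ‖ω.2‖ ^ 2 :=
      norm_add_sq_real ω.1 ω.2
    simp only [normInvol, hne, norm_neg, norm_smul, Real.norm_eq_abs,
      abs_of_nonneg (inv_nonneg.mpr hpos.le)]
    set S := Real.sqrt (1 + ‖ω.2‖ ^ 2 + 2 * ⟪ω.1, ω.2⟫) with hS
    have hS2 : S ^ 2 = 1 + ‖ω.2‖ ^ 2 + 2 * ⟪ω.1, ω.2⟫ := Real.sq_sqrt hs.le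
    clear_value S
    have ht2 : S⁻¹ * S⁻¹ = (S ^ 2)⁻¹ := by rw [← mul_inv, sq]
    have hinv : (S ^ 2)⁻¹ * S ^ 2 = 1 := inv_mul_cancel₀ (by positivity)
    linear_combination (‖ω.1 + ω.2‖^2 + ‖ω.2‖^2) * ht2 + (S^2)⁻¹ * hadd + (S^2)⁻¹ * h
      - (S^2)⁻¹ * hS2 + hinv
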